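/- SGD on strongly convex functions: assume each f_i is convex and L_i-smooth with L_max = max_i L_i, f = (1/m)∑ f_i is μ-strongly convex with minimizer θ*, and the gradient variance is bounded: E‖∇f_i(θ) - ∇f(θ)‖² ≤ σ² for all θ. If SGD is run with constant step size 0 < α < 1/(2L_max), then for all k ≥ 1, E‖θ_k - θ*‖² ≤ (1 - αμ)^k ‖θ_0 - θ*‖² + (2α/μ)σ². -/

import Mathlib

/-!
In mean square, one SGD step from `θ` is the full gradient step from `θ` plus `α²` times the
variance of the sampled gradients. For the gradient step, strong convexity gives
`⟪∇F θ, θ - θ*⟫ ≥ F θ - F θ* + μ/2 ‖θ - θ*‖²`, and smoothness at the minimiser gives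
`‖∇F θ‖² ≤ 2L (F θ - F θ*)`; as `αL ≤ 1` these combine to the contraction
`‖θ - α∇F θ - θ*‖² ≤ (1 - αμ) ‖θ - θ*‖²`. Averaging over the last sampled index and unrolling
the recursion gives `E‖θ_k - θ*‖² ≤ (1 - αμ)^k ‖θ_0 - θ*‖² + α²σ² / (αμ)`.
-/

/-- SGD iterates after `k` steps, as a function of the sequence of sampled
indices `ω : Fin k → Fin m`; `g i` is the gradient of the `i`-th sample loss. -/
noncomputable def sgdIter {n m : ℕ}
    (g : Fin m → EuclideanSpace ℝ (Fin n) → EuclideanSpace ℝ (Fin n))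
    (α : ℝ) (θ0 : EuclideanSpace ℝ (Fin n)) :
    (k : ℕ) → (Fin k → Fin m) → EuclideanSpace ℝ (Fin n)
  | 0, _ => θ0
  | (k + 1), ω =>
      sgdIter g α θ0 k (fun j => ω j.castSucc)
        - α • g (ω (Fin.last k)) (sgdIter g α θ0 k (fun j => ω j.castSucc))

open Finset
open scoped RealInnerProductSpace NNReal Gradient

section

variable {E : Type*} [NormedAddCommGroup E] [InnerProductSpace ℝ E]

theorem sum_sub_mean_eq_zero {m : ℕ} (hm : m ≠ 0) (v : Fin m → E) :
    ∑ i, (v i - (m : ℝ)⁻¹ • ∑ j, v j) = 0 := by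
  rw [sum_sub_distrib, sum_const, card_univ, Fintype.card_fin, ← Nat.cast_smul_eq_nsmul ℝ,
    smul_inv_smul₀ (Nat.cast_ne_zero.2 hm), sub_self]

theorem mean_norm_sub_smul_sq {m : ℕ} (hm : m ≠ 0) (x : E) (α : ℝ) (v : Fin m → E) :
    (m : ℝ)⁻¹ * ∑ i, ‖x - α • v i‖ ^ 2
      = ‖x - α • (m : ℝ)⁻¹ • ∑ j, v j‖ ^ 2
        + α ^ 2 * ((m : ℝ)⁻¹ * ∑ i, ‖v i - (m : ℝ)⁻¹ • ∑ j, v j‖ ^ 2) := by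
  set w := (m : ℝ)⁻¹ • ∑ j, v j
  have hsplit : ∀ i, ‖x - α • v i‖ ^ 2
      = ‖x - α • w‖ ^ 2 - 2 * α * ⟪x - α • w, v i - w⟫ + α ^ 2 * ‖v i - w‖ ^ 2 := by
    intro i
    rw [show x - α • v i = (x - α • w) - α • (v i - w) by rw [smul_sub]; abel,
      norm_sub_sq_real, real_inner_smul_right, norm_smul, mul_pow, Real.norm_eq_abs, sq_abs]
    ring
  have hcross : ∑ i, ⟪x - α • w, v i - w⟫ = 0 := by
    rw [← inner_sum, sum_sub_mean_eq_zero hm, inner_zero_right]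
  simp only [hsplit, sum_add_distrib, sum_sub_distrib, sum_const, card_univ, Fintype.card_fin,
    nsmul_eq_mul, ← mul_sum, hcross]
  field_simp
  ring

theorem lipschitzWith_mean {X : Type*} [PseudoMetricSpace X] {m : ℕ} {g : Fin m → X → E}
    {K : ℝ≥0} (hg : ∀ i, LipschitzWith K (g i)) :
    LipschitzWith K (fun x => (m : ℝ)⁻¹ • ∑ i, g i x) := by
  refine LipschitzWith.of_dist_le_mul fun x y => ?_
  have hsum : ‖∑ i, (g i x - g i y)‖ ≤ m * (K * dist x y) := by
    simpa using norm_sum_le_of_le univ fun i _ => (dist_eq_norm (g i x) (g i y)).symm.trans_le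
      ((hg i).dist_le_mul x y)
  have hmean : (m : ℝ)⁻¹ * m ≤ 1 := by
    rcases eq_or_ne m 0 with rfl | hm
    · simp
    · rw [inv_mul_cancel₀ (Nat.cast_ne_zero.2 hm)]
  rw [dist_eq_norm, ← smul_sub, ← sum_sub_distrib, norm_smul, Real.norm_of_nonneg (by positivity)]
  calc (m : ℝ)⁻¹ * ‖∑ i, (g i x - g i y)‖ ≤ (m : ℝ)⁻¹ * m * (K * dist x y) := by
        rw [mul_assoc]; gcongr
    _ ≤ K * dist x y := mul_le_of_le_one_left (by positivity) hmean

variable [CompleteSpace E]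

theorem gradient_mean {m : ℕ} {f : Fin m → E → ℝ} (hf : ∀ i, Differentiable ℝ (f i)) :
    ∇ (fun x => (m : ℝ)⁻¹ * ∑ i, f i x) = fun x => (m : ℝ)⁻¹ • ∑ i, ∇ (f i) x := by
  refine gradient_eq fun x => ?_
  rw [hasGradientAt_iff_hasFDerivAt, map_smul, map_sum]
  exact (HasFDerivAt.fun_sum fun i _ => (hf i x).hasGradientAt.hasFDerivAt).const_mul _

theorem le_add_inner_gradient_add_of_lipschitzWith_gradient {h : E → ℝ} {K : ℝ≥0}
    (hd : Differentiable ℝ h) (hlip : LipschitzWith K (∇ h)) (x y : E) :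
    h y ≤ h x + ⟪∇ h x, y - x⟫ + K / 2 * ‖y - x‖ ^ 2 := by
  set v := y - x
  let φ : ℝ → ℝ := fun t => h (x + t • v) - t * ⟪∇ h x, v⟫ - K / 2 * t ^ 2 * ‖v‖ ^ 2
  have hφ' : ∀ t, HasDerivAt φ (⟪∇ h (x + t • v) - ∇ h x, v⟫ - K * t * ‖v‖ ^ 2) t := by
    intro t
    have hline : HasDerivAt (fun s : ℝ => x + s • v) v t := by
      simpa using ((hasDerivAt_id t).smul_const v).const_add x
    have hh := ((hd (x + t • v)).hasGradientAt.hasFDerivAt).comp_hasDerivAt t hline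
    have := ((hh.sub ((hasDerivAt_id t).mul_const ⟪∇ h x, v⟫)).sub
      (((hasDerivAt_pow 2 t).const_mul (K / 2 : ℝ)).mul_const (‖v‖ ^ 2)))
    refine this.congr_deriv ?_
    rw [InnerProductSpace.toDual_apply_apply, inner_sub_left]
    ring
  have hanti : AntitoneOn φ (Set.Ici 0) := by
    refine antitoneOn_of_hasDerivWithinAt_nonpos (convex_Ici 0)
      (fun t _ => (hφ' t).continuousAt.continuousWithinAt)
      (fun t _ => (hφ' t).hasDerivWithinAt) fun t ht => ?_
    rw [interior_Ici, Set.mem_Ioi] at ht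
    have hgrad : ‖∇ h (x + t • v) - ∇ h x‖ ≤ K * (t * ‖v‖) := by
      simpa [dist_eq_norm, norm_smul, abs_of_pos ht] using hlip.dist_le_mul (x + t • v) x
    have := real_inner_le_norm (∇ h (x + t • v) - ∇ h x) v
    nlinarith [norm_nonneg v]
  have h10 := hanti (Set.mem_Ici.2 le_rfl) (Set.mem_Ici.2 zero_le_one) zero_le_one
  simp only [φ, one_smul, zero_smul, add_zero, v, add_sub_cancel] at h10
  linarith

theorem norm_gradient_sq_le_of_forall_le {h : E → ℝ} {K : ℝ≥0} (hK : 0 < K)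
    (hd : Differentiable ℝ h) (hlip : LipschitzWith K (∇ h)) {x₀ : E} (hmin : ∀ y, h x₀ ≤ h y)
    (x : E) : ‖∇ h x‖ ^ 2 ≤ 2 * K * (h x - h x₀) := by
  have hK' : (0 : ℝ) < K := hK
  have hstep := le_add_inner_gradient_add_of_lipschitzWith_gradient hd hlip x
    (x - (K : ℝ)⁻¹ • ∇ h x)
  rw [sub_sub_cancel_left, inner_neg_right, real_inner_smul_right, real_inner_self_eq_norm_sq,
    norm_neg, norm_smul, Real.norm_of_nonneg (inv_nonneg.2 hK'.le)] at hstep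
  have hsq : -((K : ℝ)⁻¹ * ‖∇ h x‖ ^ 2) + K / 2 * ((K : ℝ)⁻¹ * ‖∇ h x‖) ^ 2
      = -(‖∇ h x‖ ^ 2 / (2 * K)) := by
    field_simp
    ring
  have key : h x₀ ≤ h x - ‖∇ h x‖ ^ 2 / (2 * K) := by
    linarith [hmin (x - (K : ℝ)⁻¹ • ∇ h x)]
  rwa [le_sub_comm, div_le_iff₀ (by positivity), mul_comm] at key

theorem norm_sub_smul_gradient_sub_sq_le {h : E → ℝ} {K : ℝ≥0} {μ α : ℝ} (hK : 0 < K)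
    (hd : Differentiable ℝ h) (hlip : LipschitzWith K (∇ h))
    (hstrong : ∀ x y, h x + ⟪∇ h x, y - x⟫ + μ / 2 * ‖x - y‖ ^ 2 ≤ h y)
    {x₀ : E} (hmin : ∀ y, h x₀ ≤ h y) (hα : 0 ≤ α) (hαK : α * K ≤ 1) (x : E) :
    ‖x - α • ∇ h x - x₀‖ ^ 2 ≤ (1 - α * μ) * ‖x - x₀‖ ^ 2 := by
  have hinner : h x - h x₀ + μ / 2 * ‖x - x₀‖ ^ 2 ≤ ⟪∇ h x, x - x₀⟫ := by
    have := hstrong x x₀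
    rw [← neg_sub x x₀, inner_neg_right] at this
    linarith
  have hgrad := norm_gradient_sq_le_of_forall_le hK hd hlip hmin x
  have hgap : 0 ≤ h x - h x₀ := sub_nonneg.2 (hmin x)
  rw [sub_right_comm, norm_sub_sq_real, real_inner_smul_right, norm_smul, mul_pow,
    Real.norm_eq_abs, sq_abs, real_inner_comm]
  nlinarith [mul_le_mul_of_nonneg_left hinner hα, mul_le_mul_of_nonneg_left hgrad (sq_nonneg α),
    mul_nonneg (mul_nonneg hα (sub_nonneg.2 hαK)) hgap]

theorem mean_norm_sub_smul_sub_sq_le {m : ℕ} (hm : m ≠ 0) {g : Fin m → E → E} {h : E → ℝ}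
    {x x₀ : E} {α q σ : ℝ} (hgrad : ∇ h x = (m : ℝ)⁻¹ • ∑ i, g i x)
    (hvar : (m : ℝ)⁻¹ * ∑ i, ‖g i x - ∇ h x‖ ^ 2 ≤ σ ^ 2)
    (hdet : ‖x - α • ∇ h x - x₀‖ ^ 2 ≤ q * ‖x - x₀‖ ^ 2) :
    (m : ℝ)⁻¹ * ∑ i, ‖x - α • g i x - x₀‖ ^ 2 ≤ q * ‖x - x₀‖ ^ 2 + α ^ 2 * σ ^ 2 := by
  simp_rw [sub_right_comm x _ x₀]
  rw [sub_right_comm, hgrad] at hdet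
  rw [hgrad] at hvar
  rw [mean_norm_sub_smul_sq hm]
  nlinarith [mul_le_mul_of_nonneg_left hvar (sq_nonneg α)]

end

section

variable {n m : ℕ} (g : Fin m → EuclideanSpace ℝ (Fin n) → EuclideanSpace ℝ (Fin n))
  (α : ℝ) (θ0 : EuclideanSpace ℝ (Fin n))

theorem sum_sgdIter_succ {M : Type*} [AddCommMonoid M] (Φ : EuclideanSpace ℝ (Fin n) → M)
    (k : ℕ) :
    ∑ ω : Fin (k + 1) → Fin m, Φ (sgdIter g α θ0 (k + 1) ω)
      = ∑ ω : Fin k → Fin m, ∑ i, Φ (sgdIter g α θ0 k ω - α • g i (sgdIter g α θ0 k ω)) := by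
  rw [← Fintype.sum_prod_type_right']
  refine (Fintype.sum_equiv (Fin.snocEquiv fun _ => Fin m) _ _ fun p => ?_).symm
  simp [Fin.snocEquiv, sgdIter]

variable {g α θ0}

theorem mean_sq_dist_sgdIter_succ_le (hm : m ≠ 0) {θs : EuclideanSpace ℝ (Fin n)} {q c : ℝ}
    (hstep : ∀ θ, (m : ℝ)⁻¹ * ∑ i, ‖θ - α • g i θ - θs‖ ^ 2 ≤ q * ‖θ - θs‖ ^ 2 + c) (k : ℕ) :
    ((m : ℝ) ^ (k + 1))⁻¹ * ∑ ω, ‖sgdIter g α θ0 (k + 1) ω - θs‖ ^ 2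
      ≤ q * (((m : ℝ) ^ k)⁻¹ * ∑ ω, ‖sgdIter g α θ0 k ω - θs‖ ^ 2) + c := by
  have hmk : (m : ℝ) ^ k ≠ 0 := pow_ne_zero _ (Nat.cast_ne_zero.2 hm)
  calc ((m : ℝ) ^ (k + 1))⁻¹ * ∑ ω, ‖sgdIter g α θ0 (k + 1) ω - θs‖ ^ 2
      = ((m : ℝ) ^ k)⁻¹ * ∑ ω : Fin k → Fin m, (m : ℝ)⁻¹ *
          ∑ i, ‖sgdIter g α θ0 k ω - α • g i (sgdIter g α θ0 k ω) - θs‖ ^ 2 := by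
        rw [sum_sgdIter_succ g α θ0 (fun θ : EuclideanSpace ℝ (Fin n) => ‖θ - θs‖ ^ 2),
          pow_succ, mul_inv, mul_assoc, mul_sum]
    _ ≤ ((m : ℝ) ^ k)⁻¹ * ∑ ω : Fin k → Fin m, (q * ‖sgdIter g α θ0 k ω - θs‖ ^ 2 + c) := by
        gcongr with ω
        exact hstep _
    _ = q * (((m : ℝ) ^ k)⁻¹ * ∑ ω, ‖sgdIter g α θ0 k ω - θs‖ ^ 2) + c := by
        simp only [sum_add_distrib, ← mul_sum, sum_const, card_univ, Fintype.card_fun,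
          Fintype.card_fin, nsmul_eq_mul, Nat.cast_pow]
        field_simp

theorem mean_sq_dist_sgdIter_le (hm : m ≠ 0) {θs : EuclideanSpace ℝ (Fin n)} {q c : ℝ}
    (hq : 0 ≤ q)
    (hstep : ∀ θ, (m : ℝ)⁻¹ * ∑ i, ‖θ - α • g i θ - θs‖ ^ 2 ≤ q * ‖θ - θs‖ ^ 2 + c) (k : ℕ) :
    ((m : ℝ) ^ k)⁻¹ * ∑ ω, ‖sgdIter g α θ0 k ω - θs‖ ^ 2
      ≤ q ^ k * ‖θ0 - θs‖ ^ 2 + c * ∑ j ∈ range k, q ^ j := by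
  induction k with
  | zero => simp [sgdIter]
  | succ k ih =>
    calc _ ≤ q * (((m : ℝ) ^ k)⁻¹ * ∑ ω, ‖sgdIter g α θ0 k ω - θs‖ ^ 2) + c :=
          mean_sq_dist_sgdIter_succ_le hm hstep k
      _ ≤ q * (q ^ k * ‖θ0 - θs‖ ^ 2 + c * ∑ j ∈ range k, q ^ j) + c := by gcongr
      _ = q ^ (k + 1) * ‖θ0 - θs‖ ^ 2 + c * ∑ j ∈ range (k + 1), q ^ j := by
          rw [geom_sum_succ]
          ring

theorem mean_sq_dist_sgdIter_le_add_div (hm : m ≠ 0) {θs : EuclideanSpace ℝ (Fin n)} {q c : ℝ}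
    (hq : 0 ≤ q) (hq1 : q < 1) (hc : 0 ≤ c)
    (hstep : ∀ θ, (m : ℝ)⁻¹ * ∑ i, ‖θ - α • g i θ - θs‖ ^ 2 ≤ q * ‖θ - θs‖ ^ 2 + c) (k : ℕ) :
    ((m : ℝ) ^ k)⁻¹ * ∑ ω, ‖sgdIter g α θ0 k ω - θs‖ ^ 2 ≤ q ^ k * ‖θ0 - θs‖ ^ 2 + c / (1 - q) := by
  have hgeom := geom_sum_Ico_le_of_lt_one (m := 0) (n := k) hq hq1
  rw [← range_eq_Ico, pow_zero] at hgeom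
  refine (mean_sq_dist_sgdIter_le hm hq hstep k).trans ?_
  rw [← mul_one_div]
  gcongr

end

theorem sgd_strongly_convex_convergence_general (n m : ℕ) (hm : 0 < m)
    (f : Fin m → EuclideanSpace ℝ (Fin n) → ℝ)
    (F : EuclideanSpace ℝ (Fin n) → ℝ)
    (hF : F = fun θ => (m : ℝ)⁻¹ * ∑ i, f i θ)
    (hdiff : ∀ i, Differentiable ℝ (f i))
    (L : Fin m → NNReal)
    (hsmooth : ∀ i, LipschitzWith (L i) (gradient (f i)))
    (Lmax : ℝ) (hLmax : Lmax = ↑(Finset.univ.sup L))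
    (μ : ℝ) (hμ : 0 < μ)
    (hstrong : ∀ θ1 θ2 : EuclideanSpace ℝ (Fin n),
      F θ1 + (inner ℝ (gradient F θ1) (θ2 - θ1) : ℝ) + μ / 2 * ‖θ1 - θ2‖ ^ 2 ≤ F θ2)
    (θs : EuclideanSpace ℝ (Fin n)) (hmin : ∀ θ, F θs ≤ F θ)
    (σ : ℝ)
    (hvar : ∀ θ, (m : ℝ)⁻¹ * ∑ i, ‖gradient (f i) θ - gradient F θ‖ ^ 2 ≤ σ ^ 2)
    (α : ℝ) (hα : 0 < α) (hα2 : α < 1 / (2 * Lmax))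
    (θ0 : EuclideanSpace ℝ (Fin n)) :
    ∀ k, 1 ≤ k →
      ((m : ℝ) ^ k)⁻¹ *
        ∑ ω : Fin k → Fin m,
          ‖sgdIter (fun i => gradient (f i)) α θ0 k ω - θs‖ ^ 2
      ≤ (1 - α * μ) ^ k * ‖θ0 - θs‖ ^ 2 + (2 * α / μ) * σ ^ 2 := by
  intro k _
  subst hF hLmax
  have hK : (0 : ℝ) < univ.sup L := by
    have := hα.trans hα2
    rw [one_div_pos] at this
    linarith
  have hαK : α * univ.sup L ≤ 1 := by
    rw [lt_div_iff₀ (by positivity)] at hα2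
    linarith
  have hgradF := gradient_mean hdiff
  have hlipF : LipschitzWith (univ.sup L) (∇ fun θ => (m : ℝ)⁻¹ * ∑ i, f i θ) := by
    rw [hgradF]
    exact lipschitzWith_mean fun i => (hsmooth i).weaken (le_sup (mem_univ i))
  have hdet := norm_sub_smul_gradient_sub_sq_le (NNReal.coe_pos.1 hK) (by fun_prop) hlipF hstrong
    hmin hα.le hαK
  rcases subsingleton_or_nontrivial (EuclideanSpace ℝ (Fin n)) with _ | _
  · have hzero : ∀ x : EuclideanSpace ℝ (Fin n), ‖x - θs‖ = 0 := fun x => by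
      simp [Subsingleton.elim x θs]
    simp [hzero]
    positivity
  -- The contraction at any `θ ≠ θs` forces `1 - αμ ≥ 0`.
  obtain ⟨θ, hθ⟩ := exists_ne θs
  have hq : 0 ≤ 1 - α * μ := nonneg_of_mul_nonneg_left ((sq_nonneg _).trans (hdet θ))
    (pow_pos (norm_pos_iff.2 (sub_ne_zero.2 hθ)) 2)
  have hnoise : α ^ 2 * σ ^ 2 / (1 - (1 - α * μ)) ≤ 2 * α / μ * σ ^ 2 := by
    rw [sub_sub_cancel, show α ^ 2 * σ ^ 2 / (α * μ) = α / μ * σ ^ 2 by field_simp]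
    gcongr
    linarith
  refine (mean_sq_dist_sgdIter_le_add_div hm.ne' hq (by linarith [mul_pos hα hμ]) (by positivity)
    (fun θ => mean_norm_sub_smul_sub_sq_le hm.ne' (congrFun hgradF θ) (hvar θ) (hdet θ)) k).trans ?_
  gcongr

/-- Convergence of SGD with constant step size on a strongly convex smooth
finite-sum objective: `E‖θ_k - θ*‖² ≤ (1-αμ)^k ‖θ0 - θ*‖² + (2α/μ)σ²`, where
the expectation is over the i.i.d. uniform index sequences. -/
theorem sgd_strongly_convex_convergence (n m : ℕ) (hm : 0 < m)
    (f : Fin m → EuclideanSpace ℝ (Fin n) → ℝ)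
    (F : EuclideanSpace ℝ (Fin n) → ℝ)
    (hF : F = fun θ => (m : ℝ)⁻¹ * ∑ i, f i θ)
    (hdiff : ∀ i, Differentiable ℝ (f i))
    (hconv : ∀ i, ConvexOn ℝ Set.univ (f i))
    (L : Fin m → NNReal)
    (hsmooth : ∀ i, LipschitzWith (L i) (gradient (f i)))
    (Lmax : ℝ) (hLmax : Lmax = ↑(Finset.univ.sup L))
    (μ : ℝ) (hμ : 0 < μ)
    (hstrong : ∀ θ1 θ2 : EuclideanSpace ℝ (Fin n),
      F θ1 + (inner ℝ (gradient F θ1) (θ2 - θ1) : ℝ) + μ / 2 * ‖θ1 - θ2‖ ^ 2 ≤ F θ2)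
    (θs : EuclideanSpace ℝ (Fin n)) (hmin : ∀ θ, F θs ≤ F θ)
    (σ : ℝ)
    (hvar : ∀ θ, (m : ℝ)⁻¹ * ∑ i, ‖gradient (f i) θ - gradient F θ‖ ^ 2 ≤ σ ^ 2)
    (α : ℝ) (hα : 0 < α) (hα2 : α < 1 / (2 * Lmax))
    (θ0 : EuclideanSpace ℝ (Fin n)) :
    ∀ k, 1 ≤ k →
      ((m : ℝ) ^ k)⁻¹ *
        ∑ ω : Fin k → Fin m,
          ‖sgdIter (fun i => gradient (f i)) α θ0 k ω - θs‖ ^ 2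
      ≤ (1 - α * μ) ^ k * ‖θ0 - θs‖ ^ 2 + (2 * α / μ) * σ ^ 2 :=
  sgd_strongly_convex_convergence_general n m hm f F hF hdiff L hsmooth Lmax hLmax μ hμ hstrong θs
    hmin σ hvar α hα hα2 θ0
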